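/- arXiv:1910.07616 — 5 statements merged into one kernel-verified Lean document; each statement's English description precedes it below -/
import Mathlib

section
/- For any two bisets Ŝ and T̂ over a finite set V, |bd(Ŝ)| + |bd(T̂)| ≥ |bd(Ŝ ∖ T̂)| + |bd(T̂ ∖ Ŝ)|. -/
/-- A biset over `V`: a pair of sets `(inner, outer)` with `inner ⊆ outer`. -/
structure Biset (V : Type*) where
  inner : Set V
  outer : Set V
  subset : inner ⊆ outer

namespace Biset

variable {V : Type*}

/-- The order `Ŝ ⊆ T̂` iff `S ⊆ T` and `S' ⊆ T'`. -/
def le (S T : Biset V) : Prop := S.inner ⊆ T.inner ∧ S.outer ⊆ T.outer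

/-- Biset intersection `(S ∩ T, S' ∩ T')`. -/
def inter (S T : Biset V) : Biset V :=
  ⟨S.inner ∩ T.inner, S.outer ∩ T.outer, Set.inter_subset_inter S.subset T.subset⟩

/-- Biset union `(S ∪ T, S' ∪ T')`. -/
def union (S T : Biset V) : Biset V :=
  ⟨S.inner ∪ T.inner, S.outer ∪ T.outer, Set.union_subset_union S.subset T.subset⟩

/-- Biset difference `(S ∖ T', S' ∖ T)`. -/
def sdiff (S T : Biset V) : Biset V :=
  ⟨S.inner \ T.outer, S.outer \ T.inner,
    fun x hx => ⟨S.subset hx.1, fun h => hx.2 (T.subset h)⟩⟩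

/-- The boundary `bd(Ŝ) = S' ∖ S`. -/
def bd (S : Biset V) : Set V := S.outer \ S.inner

end Biset

/-- `|bd(Ŝ)| + |bd(T̂)| ≥ |bd(Ŝ ∖ T̂)| + |bd(T̂ ∖ Ŝ)|`. -/
theorem bd_ncard_sdiff {V : Type*} [Fintype V] (S T : Biset V) :
    (Biset.bd S).ncard + (Biset.bd T).ncard ≥
      (Biset.bd (S.sdiff T)).ncard + (Biset.bd (T.sdiff S)).ncard := by
  classical
  set A := Biset.bd (S.sdiff T)
  set B := Biset.bd (T.sdiff S)
  have hu : A ∪ B ⊆ Biset.bd S ∪ Biset.bd T := by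
    rintro x (⟨⟨hS', hT⟩, hx⟩ | ⟨⟨hT', hS⟩, hx⟩)
    · rcases Classical.em (x ∈ S.inner) with h | h
      · right; exact ⟨by_contra fun hT' => hx ⟨h, hT'⟩, hT⟩
      · left; exact ⟨hS', h⟩
    · rcases Classical.em (x ∈ T.inner) with h | h
      · left; exact ⟨by_contra fun hS' => hx ⟨h, hS'⟩, hS⟩
      · right; exact ⟨hT', h⟩
  have hi : A ∩ B ⊆ Biset.bd S ∩ Biset.bd T := by
    rintro x ⟨⟨⟨hS', hT⟩, _⟩, ⟨⟨hT', hS⟩, _⟩⟩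
    exact ⟨⟨hS', hS⟩, ⟨hT', hT⟩⟩
  calc A.ncard + B.ncard = (A ∪ B).ncard + (A ∩ B).ncard :=
        (Set.ncard_union_add_ncard_inter A B (Set.toFinite _) (Set.toFinite _)).symm
    _ ≤ (Biset.bd S ∪ Biset.bd T).ncard + (Biset.bd S ∩ Biset.bd T).ncard :=
        add_le_add (Set.ncard_le_ncard hu (Set.toFinite _)) (Set.ncard_le_ncard hi (Set.toFinite _))
    _ = (Biset.bd S).ncard + (Biset.bd T).ncard :=
        Set.ncard_union_add_ncard_inter _ _ (Set.toFinite _) (Set.toFinite _)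
end

section
/- Let h be a {0,1}-valued biuncrossable function on a crossing family of bisets. If Ĉ is a minimal violated biset of h (minimal under the biset partial order among bisets with h = 1) and Ŝ is any violated biset of h, then Ĉ and Ŝ do not overlap: either Ĉ ⊆ Ŝ, or both C' ∩ S = ∅ and C ∩ S' = ∅. In particular, the inner parts of distinct minimal violated bisets are disjoint. -/
/-- a minimal violated biset of a `{0,1}`-biuncrossable function does not
overlap any violated biset; in particular inner parts of distinct minimal violated
bisets are disjoint. -/
theorem minimal_violated_nonoverlapping {V : Type*}
    (P : Set (Biset V))
    (hP : ∀ S ∈ P, ∀ T ∈ P,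
      S.union T ∈ P ∧ S.inter T ∈ P ∧ S.sdiff T ∈ P ∧ T.sdiff S ∈ P)
    (h : Biset V → ℕ) (hval : ∀ S, h S ≤ 1)
    (huncross : ∀ S ∈ P, ∀ T ∈ P, h S = 1 → h T = 1 →
      (h (S.inter T) = 1 ∧ h (S.union T) = 1) ∨
      (h (S.sdiff T) = 1 ∧ h (T.sdiff S) = 1)) :
    (∀ C ∈ P, ∀ S ∈ P,
      h C = 1 → (∀ T ∈ P, h T = 1 → Biset.le T C → T = C) → h S = 1 →
      (Biset.le C S ∨ (C.outer ∩ S.inner = ∅ ∧ C.inner ∩ S.outer = ∅))) ∧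
    (∀ C₁ ∈ P, ∀ C₂ ∈ P,
      h C₁ = 1 → (∀ T ∈ P, h T = 1 → Biset.le T C₁ → T = C₁) →
      h C₂ = 1 → (∀ T ∈ P, h T = 1 → Biset.le T C₂ → T = C₂) →
      C₁ ≠ C₂ → C₁.inner ∩ C₂.inner = ∅) := by
  have main : ∀ C ∈ P, ∀ S ∈ P,
      h C = 1 → (∀ T ∈ P, h T = 1 → Biset.le T C → T = C) → h S = 1 →
      (Biset.le C S ∨ (C.outer ∩ S.inner = ∅ ∧ C.inner ∩ S.outer = ∅)) := by
    intro C hCP S hSP hC hmin hS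
    obtain ⟨hU, hI, hD1, hD2⟩ := hP C hCP S hSP
    rcases huncross C hCP S hSP hC hS with ⟨hi, _⟩ | ⟨hd, _⟩
    · left
      have heq : C.inter S = C := hmin _ hI hi
        ⟨Set.inter_subset_left, Set.inter_subset_left⟩
      constructor
      · rw [← heq]; exact Set.inter_subset_right
      · rw [← heq]; exact Set.inter_subset_right
    · right
      have heq : C.sdiff S = C := hmin _ hD1 hd
        ⟨Set.diff_subset, Set.diff_subset⟩
      have h1 : C.inner \ S.outer = C.inner := congrArg Biset.inner heq
      have h2 : C.outer \ S.inner = C.outer := congrArg Biset.outer heq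
      constructor
      · ext x; simp only [Set.mem_inter_iff, Set.mem_empty_iff_false, iff_false]
        rintro ⟨hx1, hx2⟩
        rw [← h2] at hx1; exact hx1.2 hx2
      · ext x; simp only [Set.mem_inter_iff, Set.mem_empty_iff_false, iff_false]
        rintro ⟨hx1, hx2⟩
        rw [← h1] at hx1; exact hx1.2 hx2
  refine ⟨main, ?_⟩
  intro C₁ h1P C₂ h2P hC1 hmin1 hC2 hmin2 hne
  rcases main C₁ h1P C₂ h2P hC1 hmin1 hC2 with hle | ⟨he1, he2⟩
  · exact absurd (hmin2 C₁ h1P hC1 hle) hne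
  · apply Set.eq_empty_of_subset_empty
    rw [← he2]
    exact Set.inter_subset_inter_right _ C₂.subset
end

section
/- Let h be a {0,1}-biuncrossable function, Ĉ a minimal violated biset of h, and L a laminar family of violated bisets of h with (V,V) ∈ L. Then all vertices of the inner part C are owned by the same biset of L: for every Ŷ ∈ L, either C ⊆ Y or C ∩ Y = ∅. -/
/-- Two bisets are non-overlapping if one is contained in the other, or their
inner parts are disjoint from the other's outer part. -/
def Biset.nonOverlap {V : Type*} (S T : Biset V) : Prop :=
  Biset.le S T ∨ Biset.le T S ∨ (S.outer ∩ T.inner = ∅ ∧ S.inner ∩ T.outer = ∅)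

/-- The full biset `(V, V)`. -/
def Biset.full (V : Type*) : Biset V := ⟨Set.univ, Set.univ, le_refl _⟩

/-- for a minimal violated biset `Ĉ` of a `{0,1}`-biuncrossable
function and a laminar family `L` of violated bisets containing `(V,V)`, all
vertices of the inner part `C` are owned by the same biset of `L`: for every
`Ŷ ∈ L`, either `C ⊆ Y` or `C ∩ Y = ∅`. -/
theorem minimal_violated_owned_together {V : Type*}
    (h : Biset V → ℕ) (hval : ∀ S, h S ≤ 1)
    (huncross : ∀ S T : Biset V, h S = 1 → h T = 1 →
      (h (S.inter T) = 1 ∧ h (S.union T) = 1) ∨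
      (h (S.sdiff T) = 1 ∧ h (T.sdiff S) = 1))
    (C : Biset V) (hC : h C = 1)
    (hmin : ∀ T : Biset V, h T = 1 → Biset.le T C → T = C)
    (L : Set (Biset V))
    (hlam : ∀ S ∈ L, ∀ T ∈ L, Biset.nonOverlap S T)
    (hviol : ∀ S ∈ L, h S = 1)
    (hfull : Biset.full V ∈ L) :
    ∀ Y ∈ L, C.inner ⊆ Y.inner ∨ C.inner ∩ Y.inner = ∅ := by
  intro Y hY
  have hYv := hviol Y hY
  rcases huncross C Y hC hYv with ⟨h1, _⟩ | ⟨h1, _⟩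
  · left
    have heq : C.inter Y = C := hmin _ h1
      ⟨Set.inter_subset_left, Set.inter_subset_left⟩
    have : (C.inter Y).inner = C.inner := by rw [heq]
    intro x hx
    rw [← this] at hx
    exact hx.2
  · right
    have heq : C.sdiff Y = C := hmin _ h1
      ⟨Set.diff_subset, Set.diff_subset⟩
    have hin : (C.sdiff Y).inner = C.inner := by rw [heq]
    ext x
    simp only [Set.mem_inter_iff, Set.mem_empty_iff_false, iff_false, not_and]
    intro hxC hxY
    rw [← hin] at hxC
    exact hxC.2 (Y.subset hxY)
end

section
/- Let Ŝ₁ and Ŝ₂ be two overlapping bisets and T̂ an arbitrary biset such that T̂ overlaps neither Ŝ₁ nor Ŝ₂. Then T̂ does not overlap any of Ŝ₁ ∩ Ŝ₂, Ŝ₁ ∪ Ŝ₂, Ŝ₁ ∖ Ŝ₂, or Ŝ₂ ∖ Ŝ₁. -/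
/-- if `Ŝ₁`, `Ŝ₂` overlap and `T̂` overlaps neither of them, then
`T̂` does not overlap `Ŝ₁ ∩ Ŝ₂`, `Ŝ₁ ∪ Ŝ₂`, `Ŝ₁ ∖ Ŝ₂`, or `Ŝ₂ ∖ Ŝ₁`. -/
theorem uncrossing_preserves_nonoverlap {V : Type*} (S₁ S₂ T : Biset V)
    (hoverlap : ¬ Biset.nonOverlap S₁ S₂)
    (h1 : Biset.nonOverlap T S₁) (h2 : Biset.nonOverlap T S₂) :
    Biset.nonOverlap T (S₁.inter S₂) ∧ Biset.nonOverlap T (S₁.union S₂) ∧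
    Biset.nonOverlap T (S₁.sdiff S₂) ∧ Biset.nonOverlap T (S₂.sdiff S₁) := by
  simp only [Biset.nonOverlap, Biset.le, Biset.inter, Biset.union, Biset.sdiff, not_or,
    Set.eq_empty_iff_forall_notMem, Set.subset_def, Set.mem_inter_iff, Set.mem_union,
    Set.mem_diff] at hoverlap h1 h2 ⊢
  obtain ⟨ho1, ho2, ho3⟩ := hoverlap
  obtain ⟨a1, b1⟩ | ⟨a1, b1⟩ | ⟨c1, d1⟩ := h1
  · obtain ⟨a2, b2⟩ | ⟨a2, b2⟩ | ⟨c2, d2⟩ := h2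
    · -- T ≤ S₁, T ≤ S₂
      exact ⟨Or.inl ⟨fun x hx => ⟨a1 x hx, a2 x hx⟩, fun x hx => ⟨b1 x hx, b2 x hx⟩⟩,
        Or.inl ⟨fun x hx => Or.inl (a1 x hx), fun x hx => Or.inl (b1 x hx)⟩,
        Or.inr (Or.inr ⟨fun x h => h.2.2 (b2 x h.1), fun x h => h.2.2 (a2 x h.1)⟩),
        Or.inr (Or.inr ⟨fun x h => h.2.2 (b1 x h.1), fun x h => h.2.2 (a1 x h.1)⟩)⟩
    · -- T ≤ S₁, S₂ ≤ T : then S₂ ≤ S₁, contradiction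
      exact absurd ⟨fun x hx => a1 x (a2 x hx), fun x hx => b1 x (b2 x hx)⟩ ho2
    · -- T ≤ S₁, T ⟂ S₂
      exact ⟨Or.inr (Or.inr ⟨fun x h => c2 x ⟨h.1, h.2.2⟩, fun x h => d2 x ⟨h.1, h.2.2⟩⟩),
        Or.inl ⟨fun x hx => Or.inl (a1 x hx), fun x hx => Or.inl (b1 x hx)⟩,
        Or.inl ⟨fun x hx => ⟨a1 x hx, fun h => d2 x ⟨hx, h⟩⟩,
                fun x hx => ⟨b1 x hx, fun h => c2 x ⟨hx, h⟩⟩⟩,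
        Or.inr (Or.inr ⟨fun x h => c2 x ⟨h.1, h.2.1⟩, fun x h => d2 x ⟨h.1, h.2.1⟩⟩)⟩
  · obtain ⟨a2, b2⟩ | ⟨a2, b2⟩ | ⟨c2, d2⟩ := h2
    · -- S₁ ≤ T, T ≤ S₂ : S₁ ≤ S₂, contradiction
      exact absurd ⟨fun x hx => a2 x (a1 x hx), fun x hx => b2 x (b1 x hx)⟩ ho1
    · -- S₁ ≤ T, S₂ ≤ T
      exact ⟨Or.inr (Or.inl ⟨fun x hx => a1 x hx.1, fun x hx => b1 x hx.1⟩),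
        Or.inr (Or.inl ⟨fun x hx => hx.elim (a1 x) (a2 x), fun x hx => hx.elim (b1 x) (b2 x)⟩),
        Or.inr (Or.inl ⟨fun x hx => a1 x hx.1, fun x hx => b1 x hx.1⟩),
        Or.inr (Or.inl ⟨fun x hx => a2 x hx.1, fun x hx => b2 x hx.1⟩)⟩
    · -- S₁ ≤ T, T ⟂ S₂ : S₁ ⟂ S₂, contradiction
      exact absurd ⟨fun x h => c2 x ⟨b1 x h.1, h.2⟩, fun x h => d2 x ⟨a1 x h.1, h.2⟩⟩ ho3
  · obtain ⟨a2, b2⟩ | ⟨a2, b2⟩ | ⟨c2, d2⟩ := h2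
    · -- T ⟂ S₁, T ≤ S₂
      exact ⟨Or.inr (Or.inr ⟨fun x h => c1 x ⟨h.1, h.2.1⟩, fun x h => d1 x ⟨h.1, h.2.1⟩⟩),
        Or.inl ⟨fun x hx => Or.inr (a2 x hx), fun x hx => Or.inr (b2 x hx)⟩,
        Or.inr (Or.inr ⟨fun x h => c1 x ⟨h.1, h.2.1⟩, fun x h => d1 x ⟨h.1, h.2.1⟩⟩),
        Or.inl ⟨fun x hx => ⟨a2 x hx, fun h => d1 x ⟨hx, h⟩⟩,
                fun x hx => ⟨b2 x hx, fun h => c1 x ⟨hx, h⟩⟩⟩⟩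
    · -- T ⟂ S₁, S₂ ≤ T : S₁ ⟂ S₂, contradiction
      exact absurd ⟨fun x h => d1 x ⟨a2 x h.2, h.1⟩, fun x h => c1 x ⟨b2 x h.2, h.1⟩⟩ ho3
    · -- T ⟂ S₁, T ⟂ S₂
      exact ⟨Or.inr (Or.inr ⟨fun x h => c1 x ⟨h.1, h.2.1⟩, fun x h => d1 x ⟨h.1, h.2.1⟩⟩),
        Or.inr (Or.inr ⟨fun x h => h.2.elim (fun p => c1 x ⟨h.1, p⟩) (fun p => c2 x ⟨h.1, p⟩),
                        fun x h => h.2.elim (fun p => d1 x ⟨h.1, p⟩) (fun p => d2 x ⟨h.1, p⟩)⟩),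
        Or.inr (Or.inr ⟨fun x h => c1 x ⟨h.1, h.2.1⟩, fun x h => d1 x ⟨h.1, h.2.1⟩⟩),
        Or.inr (Or.inr ⟨fun x h => c2 x ⟨h.1, h.2.1⟩, fun x h => d2 x ⟨h.1, h.2.1⟩⟩)⟩
end

section
/- Let r_v be the biset requirement function of a {0,1,2}-VC-SNDP instance: r_v(Ŝ) is the maximum of req(u,v) ∈ {0,1,2} over pairs u ∈ S, v ∈ V ∖ S'. Let F be an edge set connecting every terminal pair with positive requirement, i.e., |δ_F(Ŝ)| + |bd(Ŝ)| ≥ 1 whenever r_v(Ŝ) ≥ 1. Define h(Ŝ) = 1 iff r_v(Ŝ) = 2 and |δ_F(Ŝ)| + |bd(Ŝ)| = 1, and h(Ŝ) = 0 otherwise. If r_v is biuncrossable, then h is biuncrossable. -/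
/-- The biset requirement induced by a pairwise requirement `req`: the maximum of
`req u v` over `u ∈ S`, `v ∉ S'` (and `0` if no such pair exists). -/
noncomputable def bisetReq {V : Type*} (req : V → V → ℕ) (S : Biset V) : ℕ :=
  sSup {n | ∃ u ∈ S.inner, ∃ v, v ∉ S.outer ∧ req u v = n}

/-- The set of edges of `F` crossing the biset `S`. -/
def crossingEdges {V : Type*} (F : Set (Sym2 V)) (S : Biset V) : Set (Sym2 V) :=
  {e | e ∈ F ∧ ∃ u v, e = s(u, v) ∧ u ∈ S.inner ∧ v ∉ S.outer}

section Aux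

variable {V : Type*}

lemma quad_card {α : Type*} {A B C D : Set α} (hC : C.Finite) (hD : D.Finite)
    (h1 : A ⊆ C ∪ D) (h2 : B ⊆ C ∪ D) (h3 : A ∩ B ⊆ C ∩ D) :
    A.ncard + B.ncard ≤ C.ncard + D.ncard := by
  have hA : A.Finite := (hC.union hD).subset h1
  have hB : B.Finite := (hC.union hD).subset h2
  rw [← Set.ncard_union_add_ncard_inter A B hA hB,
      ← Set.ncard_union_add_ncard_inter C D hC hD]
  exact Nat.add_le_add (Set.ncard_le_ncard (Set.union_subset h1 h2) (hC.union hD))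
    (Set.ncard_le_ncard h3 (hC.subset Set.inter_subset_left))

lemma bisetReq_le_two (req : V → V → ℕ) (hrange : ∀ u v, req u v ≤ 2) (S : Biset V) :
    bisetReq req S ≤ 2 := by
  apply csSup_le'
  rintro n ⟨u, _, v, _, rfl⟩
  exact hrange u v

-- bd inclusions
lemma bd_inter_subset (S T : Biset V) :
    Biset.bd (S.inter T) ⊆ Biset.bd S ∪ Biset.bd T := by
  intro x hx
  simp only [Biset.bd, Biset.inter, Set.mem_diff, Set.mem_inter_iff, Set.mem_union] at *
  tauto

lemma bd_union_subset (S T : Biset V) :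
    Biset.bd (S.union T) ⊆ Biset.bd S ∪ Biset.bd T := by
  intro x hx
  simp only [Biset.bd, Biset.union, Set.mem_diff, Set.mem_inter_iff, Set.mem_union] at *
  tauto

lemma bd_inter_union_inter (S T : Biset V) :
    Biset.bd (S.inter T) ∩ Biset.bd (S.union T) ⊆ Biset.bd S ∩ Biset.bd T := by
  intro x hx
  simp only [Biset.bd, Biset.inter, Biset.union, Set.mem_diff, Set.mem_inter_iff,
    Set.mem_union] at *
  tauto

lemma bd_sdiff_subset (S T : Biset V) :
    Biset.bd (S.sdiff T) ⊆ Biset.bd S ∪ Biset.bd T := by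
  intro x hx
  have hT := T.subset
  simp only [Biset.bd, Biset.sdiff, Set.mem_diff, Set.mem_inter_iff, Set.mem_union] at *
  by_cases h : x ∈ S.inner
  · rcases hx with ⟨⟨hS', hTn⟩, hn⟩
    right
    refine ⟨?_, hTn⟩
    by_contra h'
    exact hn ⟨h, h'⟩
  · exact Or.inl ⟨hx.1.1, h⟩

lemma bd_sdiff_inter (S T : Biset V) :
    Biset.bd (S.sdiff T) ∩ Biset.bd (T.sdiff S) ⊆ Biset.bd S ∩ Biset.bd T := by
  intro x hx
  simp only [Biset.bd, Biset.sdiff, Set.mem_diff, Set.mem_inter_iff] at *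
  exact ⟨⟨hx.1.1.1, hx.2.1.2⟩, ⟨hx.2.1.1, hx.1.1.2⟩⟩

-- crossingEdges inclusions
lemma cross_inter_subset (F : Set (Sym2 V)) (S T : Biset V) :
    crossingEdges F (S.inter T) ⊆ crossingEdges F S ∪ crossingEdges F T := by
  rintro e ⟨hF, u, v, rfl, hu, hv⟩
  simp only [Biset.inter, Set.mem_inter_iff] at hu hv
  by_cases h : v ∈ S.outer
  · right; exact ⟨hF, u, v, rfl, hu.2, fun h' => hv ⟨h, h'⟩⟩
  · left; exact ⟨hF, u, v, rfl, hu.1, h⟩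

lemma cross_union_subset (F : Set (Sym2 V)) (S T : Biset V) :
    crossingEdges F (S.union T) ⊆ crossingEdges F S ∪ crossingEdges F T := by
  rintro e ⟨hF, u, v, rfl, hu, hv⟩
  simp only [Biset.union, Set.mem_union] at hu hv
  push_neg at hv
  rcases hu with hu | hu
  · left; exact ⟨hF, u, v, rfl, hu, hv.1⟩
  · right; exact ⟨hF, u, v, rfl, hu, hv.2⟩

lemma cross_inter_union_inter (F : Set (Sym2 V)) (S T : Biset V) :
    crossingEdges F (S.inter T) ∩ crossingEdges F (S.union T) ⊆
      crossingEdges F S ∩ crossingEdges F T := by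
  rintro e ⟨⟨hF, u, v, rfl, hu, hv⟩, _, u', v', he, hu', hv'⟩
  simp only [Biset.inter, Biset.union, Set.mem_inter_iff, Set.mem_union] at hu hv hu' hv'
  push_neg at hv'
  rw [Sym2.eq_iff] at he
  rcases he with ⟨rfl, rfl⟩ | ⟨rfl, rfl⟩
  · exact ⟨⟨hF, u, v, rfl, hu.1, hv'.1⟩, ⟨hF, u, v, rfl, hu.2, hv'.2⟩⟩
  · exact absurd (S.subset hu.1) hv'.1

lemma cross_sdiff_subset (F : Set (Sym2 V)) (S T : Biset V) :
    crossingEdges F (S.sdiff T) ⊆ crossingEdges F S ∪ crossingEdges F T := by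
  rintro e ⟨hF, u, v, rfl, hu, hv⟩
  simp only [Biset.sdiff, Set.mem_diff] at hu hv
  push_neg at hv
  by_cases h : v ∈ S.outer
  · right
    exact ⟨hF, v, u, Sym2.eq_swap, hv h, hu.2⟩
  · left; exact ⟨hF, u, v, rfl, hu.1, h⟩

lemma cross_sdiff_inter (F : Set (Sym2 V)) (S T : Biset V) :
    crossingEdges F (S.sdiff T) ∩ crossingEdges F (T.sdiff S) ⊆
      crossingEdges F S ∩ crossingEdges F T := by
  rintro e ⟨⟨hF, u, v, rfl, hu, hv⟩, _, u', v', he, hu', hv'⟩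
  simp only [Biset.sdiff, Set.mem_diff] at hu hv hu' hv'
  push_neg at hv hv'
  rw [Sym2.eq_iff] at he
  rcases he with ⟨rfl, rfl⟩ | ⟨rfl, rfl⟩
  · exact absurd (T.subset hu'.1) hu.2
  · -- u' = v, v' = u : u ∈ S \ T', v ∈ T \ S'
    refine ⟨⟨hF, u, v, rfl, hu.1, hu'.2⟩, ⟨hF, v, u, Sym2.eq_swap, hu'.1, hu.2⟩⟩

end Aux

/-- for a `{0,1,2}`-VC-SNDP requirement `r_v` that is biuncrossable
and an edge set `F` with `|δ_F(Ŝ)| + |bd(Ŝ)| ≥ 1` whenever `r_v(Ŝ) ≥ 1`, the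
function `h` with `h(Ŝ) = 1` iff `r_v(Ŝ) = 2` and `|δ_F(Ŝ)| + |bd(Ŝ)| = 1` is
biuncrossable. -/
theorem vc_residual_biuncrossable {V : Type*} [Fintype V]
    (req : V → V → ℕ) (hsym : ∀ u v, req u v = req v u)
    (hrange : ∀ u v, req u v ≤ 2)
    (F : Set (Sym2 V))
    (huncross : ∀ S T : Biset V,
      0 < bisetReq req S → 0 < bisetReq req T →
      bisetReq req (S.inter T) + bisetReq req (S.union T) ≥
        bisetReq req S + bisetReq req T ∨
      bisetReq req (S.sdiff T) + bisetReq req (T.sdiff S) ≥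
        bisetReq req S + bisetReq req T)
    (hconn : ∀ S : Biset V, 1 ≤ bisetReq req S →
      1 ≤ (crossingEdges F S).ncard + (Biset.bd S).ncard) :
    ∀ S T : Biset V,
      (bisetReq req S = 2 ∧ (crossingEdges F S).ncard + (Biset.bd S).ncard = 1) →
      (bisetReq req T = 2 ∧ (crossingEdges F T).ncard + (Biset.bd T).ncard = 1) →
      ((bisetReq req (S.inter T) = 2 ∧
          (crossingEdges F (S.inter T)).ncard + (Biset.bd (S.inter T)).ncard = 1) ∧
       (bisetReq req (S.union T) = 2 ∧
          (crossingEdges F (S.union T)).ncard + (Biset.bd (S.union T)).ncard = 1)) ∨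
      ((bisetReq req (S.sdiff T) = 2 ∧
          (crossingEdges F (S.sdiff T)).ncard + (Biset.bd (S.sdiff T)).ncard = 1) ∧
       (bisetReq req (T.sdiff S) = 2 ∧
          (crossingEdges F (T.sdiff S)).ncard + (Biset.bd (T.sdiff S)).ncard = 1)) := by
  intro S T ⟨hrS, hfS⟩ ⟨hrT, hfT⟩
  have hle := bisetReq_le_two req hrange
  have hun := huncross S T (by omega) (by omega)
  have hbd1 := quad_card (Set.toFinite _) (Set.toFinite _)
    (bd_inter_subset S T) (bd_union_subset S T) (bd_inter_union_inter S T)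
  have hbd2 := quad_card (Set.toFinite _) (Set.toFinite _)
    (bd_sdiff_subset S T) ((bd_sdiff_subset T S).trans (Set.union_comm _ _).subset) (bd_sdiff_inter S T)
  have hcr1 := quad_card (Set.toFinite _) (Set.toFinite _)
    (cross_inter_subset F S T) (cross_union_subset F S T) (cross_inter_union_inter F S T)
  have hcr2 := quad_card (Set.toFinite _) (Set.toFinite _)
    (cross_sdiff_subset F S T) ((cross_sdiff_subset F T S).trans (Set.union_comm _ _).subset) (cross_sdiff_inter F S T)
  rcases hun with hun | hun
  · left
    have h1 : bisetReq req (S.inter T) = 2 := by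
      have := hle (S.inter T); have := hle (S.union T); omega
    have h2 : bisetReq req (S.union T) = 2 := by
      have := hle (S.inter T); have := hle (S.union T); omega
    have hc1 := hconn (S.inter T) (by omega)
    have hc2 := hconn (S.union T) (by omega)
    refine ⟨⟨h1, ?_⟩, ⟨h2, ?_⟩⟩ <;> omega
  · right
    have h1 : bisetReq req (S.sdiff T) = 2 := by
      have := hle (S.sdiff T); have := hle (T.sdiff S); omega
    have h2 : bisetReq req (T.sdiff S) = 2 := by
      have := hle (S.sdiff T); have := hle (T.sdiff S); omega
    have hc1 := hconn (S.sdiff T) (by omega)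
    have hc2 := hconn (T.sdiff S) (by omega)
    refine ⟨⟨h1, ?_⟩, ⟨h2, ?_⟩⟩ <;> omega
end
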